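/- Let m be odd, m ≥ 5, m = 2k+1, and consider the resolution classes R_0,...,R_{m-1} of Construction described below on K_{2m}* with parts X, Y. The arcs used by R_0,...,R_{m-1} consist of: all m arcs of pure left difference k+1 (arcs (x_i, x_{i+k+1})), all m arcs of pure right difference k+1 (arcs (y_i, y_{i+k+1})), and all arcs of mixed differences except the 2m arcs (x_{k+i}, y_{k+2i}) and (y_{2k+2i}, x_i) for i ∈ Z_m. -/

import Mathlib

/-- The cycle `C_i` of the Construction (see paper): `x`-vertices are `Sum.inl`,
`y`-vertices are `Sum.inr`. -/
def cycC (m k : ℕ) (i : ZMod m) : ZMod m → ZMod m ⊕ ZMod m := fun t =>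
  if t.val % 2 = 0 then Sum.inl (((t.val / 2 : ℕ) : ZMod m) + i)
  else Sum.inr (((t.val / 2 : ℕ) : ZMod m) + 2 * i)

/-- The cycle `C_i'` of the Construction. -/
def cycC' (m k : ℕ) (i : ZMod m) : ZMod m → ZMod m ⊕ ZMod m := fun t =>
  if t.val % 2 = 0 then Sum.inr ((k : ZMod m) + ((t.val / 2 : ℕ) : ZMod m) + 2 * i)
  else Sum.inl ((k : ZMod m) + (((t.val + 1) / 2 : ℕ) : ZMod m) + i)

/-- The arc set of the directed cycle enumerated by `c`. -/
def arcsOf {m : ℕ} (c : ZMod m → ZMod m ⊕ ZMod m) :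
    Set ((ZMod m ⊕ ZMod m) × (ZMod m ⊕ ZMod m)) :=
  {p | ∃ t : ZMod m, p = (c t, c (t + 1))}

/-!
Adding `i` to `x`-indices and `2 i` to `y`-indices maps `C_0, C_0'` to `C_i, C_i'` and preserves
the difference `b - a` of a pure arc, the level `2 a - b` of an arc `(x_a, y_b)` and the level
`2 b - a` of an arc `(y_a, x_b)`. Each class of arcs with a given type and invariant is a single
orbit of these translations (for pure right arcs because `2` is a unit modulo the odd `m`), so the
union of the `R_i` is read off from `C_0 ∪ C_0'`: its arcs `(x_a, y_b)` have levels
`0, …, k - 1, k + 1, …, 2k`, all but `k`; its arcs `(y_a, x_b)` have levels `2, …, 2k + 1`, all but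
`1 = 2k + 2`; its two pure arcs `(x_k, x_0)` and `(y_{2k}, y_k)` have difference `k + 1`.
-/

open Sum

namespace Construction

variable {m k : ℕ}

lemma two_mul_add_one_eq_zero (hm : m = 2 * k + 1) : 2 * (k : ZMod m) + 1 = 0 := by
  subst hm
  exact_mod_cast ZMod.natCast_self (2 * k + 1)

lemma natCast_ne_natCast {a b : ℕ} (ha : a < m) (hb : b < m) (hab : a ≠ b) :
    (a : ZMod m) ≠ b :=
  (CharP.natCast_injOn_Iio (ZMod m) m).ne ha hb hab

lemma exists_eq_add_and_eq_add_two_mul_iff {R : Type*} [CommRing R] (a b c : R) :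
    (∃ i, a = c + i ∧ b = c + 2 * i) ↔ 2 * a - b = c :=
  ⟨fun ⟨i, ha, hb⟩ => by rw [ha, hb]; ring, fun h => ⟨a - c, by ring, by linear_combination -h⟩⟩

lemma mem_arcsOf_iff (hm : m = 2 * k + 1) (c : ZMod m → ZMod m ⊕ ZMod m)
    (p : (ZMod m ⊕ ZMod m) × (ZMod m ⊕ ZMod m)) :
    p ∈ arcsOf c ↔
      (∃ j < k, p = (c ↑(2 * j), c ↑(2 * j + 1))) ∨
      (∃ j < k, p = (c ↑(2 * j + 1), c ↑(2 * j + 2))) ∨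
      p = (c ↑(2 * k), c 0) := by
  have : NeZero m := ⟨by omega⟩
  have hwrap : ((2 * k + 1 : ℕ) : ZMod m) = 0 := by rw [← hm, ZMod.natCast_self]
  constructor
  · rintro ⟨t, rfl⟩
    obtain ⟨n, hn, rfl⟩ : ∃ n < m, (n : ZMod m) = t := ⟨t.val, t.val_lt, ZMod.natCast_zmod_val t⟩
    rw [← Nat.cast_succ]
    obtain ⟨j, rfl | rfl⟩ := Nat.even_or_odd' n
    · obtain hj | rfl : j < k ∨ j = k := by omega
      · exact Or.inl ⟨j, hj, rfl⟩
      · exact Or.inr (Or.inr (by rw [hwrap]))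
    · exact Or.inr (Or.inl ⟨j, by omega, rfl⟩)
  · rintro (⟨j, -, rfl⟩ | ⟨j, -, rfl⟩ | rfl)
    · exact ⟨↑(2 * j), by push_cast; rfl⟩
    · exact ⟨↑(2 * j + 1), by push_cast; ring_nf⟩
    · exact ⟨↑(2 * k), by rw [← Nat.cast_succ, hwrap]⟩

section Evaluation

variable {j : ℕ} (i : ZMod m)

lemma cycC_two_mul (h : 2 * j < m) : cycC m k i ↑(2 * j) = inl (j + i) := by
  simp only [cycC, ZMod.val_cast_of_lt h]
  simp

lemma cycC_two_mul_add_one (h : 2 * j + 1 < m) : cycC m k i ↑(2 * j + 1) = inr (j + 2 * i) := by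
  simp only [cycC, ZMod.val_cast_of_lt h]
  simp [show (2 * j + 1) / 2 = j by omega]

lemma cycC'_two_mul (h : 2 * j < m) : cycC' m k i ↑(2 * j) = inr (k + j + 2 * i) := by
  simp only [cycC', ZMod.val_cast_of_lt h]
  simp

lemma cycC'_two_mul_add_one (h : 2 * j + 1 < m) :
    cycC' m k i ↑(2 * j + 1) = inl (k + j + 1 + i) := by
  simp only [cycC', ZMod.val_cast_of_lt h]
  simp [show (2 * j + 1 + 1) / 2 = j + 1 by omega, add_assoc]

end Evaluation

lemma mem_arcsOf_cycC (hm : m = 2 * k + 1) (i : ZMod m)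
    (p : (ZMod m ⊕ ZMod m) × (ZMod m ⊕ ZMod m)) :
    p ∈ arcsOf (cycC m k i) ↔
      (∃ j < k, p = (inl (j + i), inr (j + 2 * i))) ∨
      (∃ j < k, p = (inr (j + 2 * i), inl (j + 1 + i))) ∨
      p = (inl (k + i), inl i) := by
  have h0 : cycC m k i 0 = inl i := by simpa using cycC_two_mul (k := k) (j := 0) i (by omega)
  rw [mem_arcsOf_iff hm]
  refine or_congr (exists_congr fun j => and_congr_right fun hj => ?_)
    (or_congr (exists_congr fun j => and_congr_right fun hj => ?_) ?_)
  · rw [cycC_two_mul i (by omega), cycC_two_mul_add_one i (by omega)]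
  · rw [cycC_two_mul_add_one i (by omega), ← mul_add_one, cycC_two_mul i (by omega)]
    push_cast; rfl
  · rw [cycC_two_mul i (by omega), h0]

lemma mem_arcsOf_cycC' (hm : m = 2 * k + 1) (i : ZMod m)
    (p : (ZMod m ⊕ ZMod m) × (ZMod m ⊕ ZMod m)) :
    p ∈ arcsOf (cycC' m k i) ↔
      (∃ j < k, p = (inr (k + j + 2 * i), inl (k + j + 1 + i))) ∨
      (∃ j < k, p = (inl (k + j + 1 + i), inr (k + j + 1 + 2 * i))) ∨
      p = (inr (k + k + 2 * i), inr (k + 2 * i)) := by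
  have h0 : cycC' m k i 0 = inr (k + 2 * i) := by
    simpa using cycC'_two_mul (k := k) (j := 0) i (by omega)
  rw [mem_arcsOf_iff hm]
  refine or_congr (exists_congr fun j => and_congr_right fun hj => ?_)
    (or_congr (exists_congr fun j => and_congr_right fun hj => ?_) ?_)
  · rw [cycC'_two_mul i (by omega), cycC'_two_mul_add_one i (by omega)]
  · rw [cycC'_two_mul_add_one i (by omega), ← mul_add_one, cycC'_two_mul i (by omega)]
    push_cast; ring_nf
  · rw [cycC'_two_mul i (by omega), h0]

def usedArcs (m k : ℕ) : Set ((ZMod m ⊕ ZMod m) × (ZMod m ⊕ ZMod m)) :=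
  ⋃ i : ZMod m, arcsOf (cycC m k i) ∪ arcsOf (cycC' m k i)

section UsedArcs

variable (hm : m = 2 * k + 1) (a b : ZMod m)
include hm

lemma inl_inl_mem_usedArcs : (inl a, inl b) ∈ usedArcs m k ↔ b = a + (k + 1) := by
  have key := two_mul_add_one_eq_zero hm
  simp only [usedArcs, Set.mem_iUnion, Set.mem_union, mem_arcsOf_cycC hm, mem_arcsOf_cycC' hm,
    Prod.mk.injEq, inl.injEq, reduceCtorEq, and_false, false_and, and_self, exists_const, false_or,
    or_false, or_self, exists_eq_right']
  constructor <;> intro h <;> linear_combination -h - key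

lemma inr_inr_mem_usedArcs : (inr a, inr b) ∈ usedArcs m k ↔ b = a + (k + 1) := by
  have key := two_mul_add_one_eq_zero hm
  simp only [usedArcs, Set.mem_iUnion, Set.mem_union, mem_arcsOf_cycC hm, mem_arcsOf_cycC' hm,
    Prod.mk.injEq, inr.injEq, reduceCtorEq, and_false, false_and, and_self, exists_const, false_or,
    or_self]
  constructor
  · rintro ⟨i, rfl, rfl⟩
    linear_combination -key
  · rintro rfl
    -- `2` is invertible in `ZMod m` with inverse `k + 1`
    refine ⟨(k + 1) * (a - 2 * k), ?_, ?_⟩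
    · linear_combination (2 * k - a) * key
    · linear_combination (1 - a + 2 * k) * key

lemma inl_inr_mem_usedArcs : (inl a, inr b) ∈ usedArcs m k ↔ 2 * a - b ≠ k := by
  have : NeZero m := ⟨by omega⟩
  simp only [usedArcs, Set.mem_iUnion, Set.mem_union, mem_arcsOf_cycC hm, mem_arcsOf_cycC' hm,
    Prod.mk.injEq, inl.injEq, inr.injEq, reduceCtorEq, and_false, false_and, and_self, exists_const,
    false_or, or_false, or_self, ne_eq]
  constructor
  · rintro ⟨i, ⟨j, hj, rfl, rfl⟩ | ⟨j, hj, rfl, rfl⟩⟩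
    · have h : 2 * (j + i) - (j + 2 * i) = ((j : ℕ) : ZMod m) := by ring
      rw [h]
      exact natCast_ne_natCast (by omega) (by omega) (by omega)
    · have h : 2 * (k + j + 1 + i) - (k + j + 1 + 2 * i) = ((k + j + 1 : ℕ) : ZMod m) := by
        push_cast; ring
      rw [h]
      exact natCast_ne_natCast (by omega) (by omega) (by omega)
  · intro hne
    obtain ⟨n, hn, hna⟩ : ∃ n < m, (n : ZMod m) = 2 * a - b :=
      ⟨_, ZMod.val_lt _, ZMod.natCast_zmod_val _⟩
    refine ⟨b - a, ?_⟩
    obtain hlt | rfl | ⟨j, rfl⟩ : n < k ∨ n = k ∨ ∃ j, n = k + j + 1 := by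
      rcases lt_trichotomy n k with h | h | h
      exacts [.inl h, .inr (.inl h), .inr (.inr ⟨n - k - 1, by omega⟩)]
    · exact .inl ⟨n, hlt, by linear_combination -hna, by linear_combination -hna⟩
    · exact absurd hna.symm hne
    · push_cast at hna
      exact .inr ⟨j, by omega, by linear_combination -hna, by linear_combination -hna⟩

lemma inr_inl_mem_usedArcs : (inr a, inl b) ∈ usedArcs m k ↔ a ≠ 2 * k + 2 * b := by
  have : NeZero m := ⟨by omega⟩
  have key := two_mul_add_one_eq_zero hm
  simp only [usedArcs, Set.mem_iUnion, Set.mem_union, mem_arcsOf_cycC hm, mem_arcsOf_cycC' hm,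
    Prod.mk.injEq, inl.injEq, inr.injEq, reduceCtorEq, and_false, false_and, and_self, exists_const,
    false_or, or_false, or_self, ne_eq]
  constructor
  · rintro ⟨i, ⟨j, hj, rfl, rfl⟩ | ⟨j, hj, rfl, rfl⟩⟩ h
    · have hzero : ((j + 1 : ℕ) : ZMod m) = (0 : ℕ) := by
        push_cast; linear_combination -h - key
      exact natCast_ne_natCast (by omega) (by omega) (by omega) hzero
    · have hzero : ((k + j + 1 : ℕ) : ZMod m) = (0 : ℕ) := by
        push_cast; linear_combination -h - key
      exact natCast_ne_natCast (by omega) (by omega) (by omega) hzero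
  · intro hne
    obtain ⟨n, hn, hna⟩ : ∃ n < m, (n : ZMod m) = 2 * b - a - 2 :=
      ⟨_, ZMod.val_lt _, ZMod.natCast_zmod_val _⟩
    refine ⟨a - b + 1, ?_⟩
    obtain hlt | ⟨j, hj, rfl⟩ | rfl : n < k ∨ (∃ j < k, n = k + j) ∨ n = 2 * k := by
      by_cases h : n < k
      · exact .inl h
      by_cases h' : n = 2 * k
      · exact .inr (.inr h')
      · exact .inr (.inl ⟨n - k, by omega, by omega⟩)
    · exact .inl ⟨n, hlt, by linear_combination -hna, by linear_combination -hna⟩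
    · push_cast at hna
      exact .inr ⟨j, hj, by linear_combination -hna, by linear_combination -hna⟩
    · push_cast at hna
      exact absurd (by linear_combination hna - 2 * key) hne

end UsedArcs

end Construction

open Construction

theorem construction_used_arcs (m k : ℕ) (hm : m = 2 * k + 1) :
    (⋃ i : ZMod m, arcsOf (cycC m k i) ∪ arcsOf (cycC' m k i)) =
      {p | ∃ a : ZMod m, p = (Sum.inl a, Sum.inl (a + ((k : ZMod m) + 1)))} ∪
      {p | ∃ a : ZMod m, p = (Sum.inr a, Sum.inr (a + ((k : ZMod m) + 1)))} ∪
      ({p | (∃ a b : ZMod m, p = (Sum.inl a, Sum.inr b)) ∨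
            (∃ a b : ZMod m, p = (Sum.inr a, Sum.inl b))} \
       {p | ∃ i : ZMod m,
            p = (Sum.inl ((k : ZMod m) + i), Sum.inr ((k : ZMod m) + 2 * i)) ∨
            p = (Sum.inr (2 * (k : ZMod m) + 2 * i), Sum.inl i)}) := by
  change usedArcs m k = _
  ext ⟨a | a, b | b⟩ <;>
    simp only [Set.mem_union, Set.mem_ofPred_eq, Set.mem_sdiff, Prod.mk.injEq, inl.injEq, inr.injEq,
      reduceCtorEq, false_and, and_false, exists_const, exists_eq_left', or_false, false_or, or_self,
      and_true, true_and, not_false_eq_true, exists_and_left, exists_eq', exists_eq_right', and_self]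
  · exact inl_inl_mem_usedArcs hm a b
  · rw [inl_inr_mem_usedArcs hm, Ne, exists_eq_add_and_eq_add_two_mul_iff]
  · exact inr_inl_mem_usedArcs hm a b
  · exact inr_inr_mem_usedArcs hm a b
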